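/- Let M be an N×N unitary matrix and let I ⊆ J be intervals of indices such that J contains the b-neighborhood of I, where M is cyclically b-band-diagonal. Then the rows of M with indices in the complement of I, together with the standard basis vectors with indices in J, span all of C^N. -/

import Mathlib

/-- Cyclic distance on indices `0, ..., N-1`. -/
def cycDist (N i j : ℕ) : ℕ := min ((i : ℤ) - j).natAbs (N - ((i : ℤ) - j).natAbs)

open Fin.NatCast in
/-- A cyclic interval in `Fin N`: a set of consecutive residues. -/
def IsCycInterval {N : ℕ} [NeZero N] (S : Set (Fin N)) : Prop :=
  ∃ (a : Fin N) (len : ℕ), S = {i | ∃ t : ℕ, t < len ∧ i = a + (t : Fin N)}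

/-! The rows of a unitary matrix span everything. A row indexed outside `I` is one of the
generators; a row indexed inside `I` is supported, by the band condition, on the
`b`-neighbourhood of `I`, hence on `J`, so it is a combination of the basis vectors `e_j`,
`j ∈ J`. -/

open Submodule

theorem Matrix.span_row_eq_top_of_isUnit {n R : Type*} [Fintype n] [DecidableEq n] [CommRing R]
    {M : Matrix n n R} (hM : IsUnit M) : span R (Set.range M.row) = ⊤ := by
  rw [← range_vecMulLinear, LinearMap.range_eq_top]
  exact Matrix.vecMul_surjective_iff_isUnit.mpr hM

theorem Pi.mem_span_single_image_of_support_subset {n R : Type*} [Finite n] [DecidableEq n]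
    [CommRing R] {v : n → R} {s : Set n} (hv : Function.support v ⊆ s) :
    v ∈ span R ((fun j => Pi.single j (1 : R)) '' s) := by
  have hbasis := (Pi.basisFun R n).mem_span_image (m := v) (s := s)
  simp only [Pi.basisFun_apply] at hbasis
  rw [hbasis]
  intro j hj
  exact hv (by simpa [Pi.basisFun_repr] using hj)

theorem rows_and_basis_span_general (N b : ℕ) [NeZero N]
    (M : Matrix (Fin N) (Fin N) ℂ) (hM : M ∈ Matrix.unitaryGroup (Fin N) ℂ)
    (hband : ∀ i j : Fin N, ¬ cycDist N i.val j.val < b → M i j = 0)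
    (I J : Set (Fin N))
    (hnbhd : ∀ j : Fin N, (∃ i ∈ I, cycDist N i.val j.val < b) → j ∈ J) :
    Submodule.span ℂ
        (((fun i : Fin N => M i) '' Iᶜ) ∪ ((fun j : Fin N => Pi.single j (1 : ℂ)) '' J))
      = ⊤ := by
  rw [eq_top_iff, ← Matrix.span_row_eq_top_of_isUnit (Unitary.isUnit_coe (U := ⟨M, hM⟩)),
    span_le]
  rintro _ ⟨i, rfl⟩
  by_cases hi : i ∈ I
  · have hsupport : Function.support (M i) ⊆ J := fun j hj =>
      hnbhd j ⟨i, hi, not_not.mp (mt (hband i j) hj)⟩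
    exact span_mono Set.subset_union_right
      (Pi.mem_span_single_image_of_support_subset hsupport)
  · exact subset_span (Or.inl ⟨i, hi, rfl⟩)

theorem rows_and_basis_span (N b : ℕ) [NeZero N]
    (M : Matrix (Fin N) (Fin N) ℂ) (hM : M ∈ Matrix.unitaryGroup (Fin N) ℂ)
    (hband : ∀ i j : Fin N, ¬ cycDist N i.val j.val < b → M i j = 0)
    (I J : Set (Fin N)) (hIJ : I ⊆ J) (hI : IsCycInterval I) (hJ : IsCycInterval J)
    (hnbhd : ∀ j : Fin N, (∃ i ∈ I, cycDist N i.val j.val < b) → j ∈ J) :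
    Submodule.span ℂ
        (((fun i : Fin N => M i) '' Iᶜ) ∪ ((fun j : Fin N => Pi.single j (1 : ℂ)) '' J))
      = ⊤ :=
  rows_and_basis_span_general N b M hM hband I J hnbhd
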